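/- For every n ≥ 1, the alternating group A_n has an ordered generating system. -/

import Mathlib

/-- `(a, m)` is an *ordered generating system* of the group `G` if every `m k` is positive
and every `g : G` has a unique representation `g = a 0 ^ i 0 * a 1 ^ i 1 * ⋯ * a (n-1) ^ i (n-1)`
with `0 ≤ i k < m k` for all `k`. -/
def IsOGS {G : Type*} [Group G] {n : ℕ} (a : Fin n → G) (m : Fin n → ℕ) : Prop :=
  (∀ k, 0 < m k) ∧
    ∀ g : G, ∃! i : (k : Fin n) → Fin (m k),
      g = (List.ofFn fun k => a k ^ ((i k : ℕ))).prod

/-- A group `G` has an ordered generating system if some tuple of elements together with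
some bounds forms one. -/
def HasOGS (G : Type*) [Group G] : Prop :=
  ∃ (n : ℕ) (a : Fin n → G) (m : Fin n → ℕ), IsOGS a m

/-! Realise `A n` inside `A (n + 1)` as the stabiliser of `0`. If `t : P → A (n + 1)` moves `0`
to `n + 1` distinct points, then `(p, σ) ↦ t p * σ` is injective on `P × A n`, hence bijective by
counting, so an OGS of `A n` extends to one of `A (n + 1)` once `t` is itself given by powers of a
few elements. For `n + 1` odd the rotation `r` is even, and `r ^ i` sends `0` to `i`. For
`n + 1 = 2 m` it is odd, and `b ^ i * c ^ j` with `c = r ^ 2`, `b = r * swap 1 3`, `i < 2`, `j < m`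
sends `0` to `2 j + i`. -/

open Function Equiv Fin.NatCast

section OrderedGeneratingSystem

variable {G H : Type*} [Group G] [Group H]

def ogsProd {n : ℕ} (a : Fin n → G) (m : Fin n → ℕ) (i : (k : Fin n) → Fin (m k)) : G :=
  (List.ofFn fun k => a k ^ (i k : ℕ)).prod

theorem isOGS_iff_bijective {n : ℕ} {a : Fin n → G} {m : Fin n → ℕ} :
    IsOGS a m ↔ Bijective (ogsProd a m) := by
  simp only [IsOGS, bijective_iff_existsUnique, eq_comm (a := ogsProd a m _)]
  refine ⟨And.right, fun h => ⟨fun k => ?_, h⟩⟩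
  obtain ⟨i, -⟩ := h 1
  exact Fin.pos (i k)

theorem hasOGS_iff_exists_bijective :
    HasOGS G ↔ ∃ (n : ℕ) (a : Fin n → G) (m : Fin n → ℕ), Bijective (ogsProd a m) := by
  simp only [HasOGS, isOGS_iff_bijective]

theorem ogsProd_cons {n : ℕ} (a₀ : G) (a : Fin n → G) (m₀ : ℕ) (m : Fin n → ℕ)
    (i : (k : Fin (n + 1)) → Fin ((Fin.cons m₀ m : Fin (n + 1) → ℕ) k)) :
    ogsProd (Fin.cons a₀ a) (Fin.cons m₀ m) i = a₀ ^ (i 0 : ℕ) * ogsProd a m fun k => i k.succ := by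
  simp only [ogsProd, List.ofFn_succ, List.prod_cons]
  rfl

theorem bijective_ogsProd_cons_iff {n : ℕ} {a₀ : G} {a : Fin n → G} {m₀ : ℕ} {m : Fin n → ℕ} :
    Bijective (ogsProd (Fin.cons a₀ a) (Fin.cons m₀ m)) ↔
      Bijective fun p : Fin m₀ × ((k : Fin n) → Fin (m k)) => a₀ ^ (p.1 : ℕ) * ogsProd a m p.2 := by
  have h : ogsProd (Fin.cons a₀ a) (Fin.cons m₀ m) =
      (fun p : Fin m₀ × ((k : Fin n) → Fin (m k)) => a₀ ^ (p.1 : ℕ) * ogsProd a m p.2) ∘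
        (Fin.consEquiv fun k => Fin ((Fin.cons m₀ m : Fin (n + 1) → ℕ) k)).symm :=
    funext (ogsProd_cons a₀ a m₀ m)
  rw [h]
  exact Equiv.bijective_comp _ _

theorem ogsProd_map {n : ℕ} (φ : H →* G) (b : Fin n → H) (m : Fin n → ℕ) :
    ogsProd (fun k => φ (b k)) m = φ ∘ ogsProd b m := by
  ext i
  simp [ogsProd, map_list_prod, List.map_ofFn, Function.comp_def]

theorem HasOGS.of_subsingleton [Subsingleton G] : HasOGS G :=
  hasOGS_iff_exists_bijective.2 ⟨0, Fin.elim0, Fin.elim0, ⟨fun _ _ _ => Subsingleton.elim _ _,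
    fun _ => ⟨fun k => k.elim0, Subsingleton.elim _ _⟩⟩⟩

theorem HasOGS.of_bijective_pow_mul (hH : HasOGS H) (φ : H →* G) {a : G} {m : ℕ}
    (h : Bijective fun p : Fin m × H => a ^ (p.1 : ℕ) * φ p.2) : HasOGS G := by
  obtain ⟨r, b, mb, hb⟩ := hasOGS_iff_exists_bijective.1 hH
  refine hasOGS_iff_exists_bijective.2 ⟨r + 1, Fin.cons a fun k => φ (b k), Fin.cons m mb, ?_⟩
  rw [bijective_ogsProd_cons_iff, ogsProd_map]
  exact h.comp (bijective_id.prodMap hb)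

theorem HasOGS.of_bijective_pow_mul_pow_mul (hH : HasOGS H) (φ : H →* G) {a b : G}
    {m₁ m₂ : ℕ}
    (h : Bijective fun p : (Fin m₁ × Fin m₂) × H => a ^ (p.1.1 : ℕ) * b ^ (p.1.2 : ℕ) * φ p.2) :
    HasOGS G := by
  obtain ⟨r, c, mc, hc⟩ := hasOGS_iff_exists_bijective.1 hH
  refine hasOGS_iff_exists_bijective.2
    ⟨r + 2, Fin.cons a (Fin.cons b fun k => φ (c k)), Fin.cons m₁ (Fin.cons m₂ mc), ?_⟩
  rw [bijective_ogsProd_cons_iff]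
  simp only [ogsProd_cons, ogsProd_map, ← mul_assoc]
  have e := (Fin.consEquiv fun k => Fin ((Fin.cons m₂ mc : Fin (r + 1) → ℕ) k)).symm.bijective
  exact (h.comp (Equiv.prodAssoc _ _ _).symm.bijective).comp
    (bijective_id.prodMap ((bijective_id.prodMap hc).comp e))

end OrderedGeneratingSystem

theorem injective_mul_of_injective_smul {G H X P : Type*} [Group G] [Group H] [MulAction G X]
    {φ : H →* G} (hφ : Injective φ) {x : X} (hx : ∀ h, φ h • x = x) {t : P → G}
    (ht : Injective fun p => t p • x) : Injective fun q : P × H => t q.1 * φ q.2 := by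
  rintro ⟨p, h⟩ ⟨p', h'⟩ heq
  have hp : p = p' := ht <| by
    simpa only [mul_smul, hx] using congrArg (· • x) heq
  subst hp
  exact Prod.ext rfl (hφ (mul_left_cancel heq))

namespace alternatingGroup

variable {α β : Type*} [Fintype α] [DecidableEq α] [Fintype β] [DecidableEq β] {p : β → Prop}
  [DecidablePred p]

def extendDomainHom (f : α ≃ Subtype p) : alternatingGroup α →* alternatingGroup β :=
  ((Perm.extendDomainHom f).comp (alternatingGroup α).subtype).codRestrict _ fun σ =>
    Perm.mem_alternatingGroup.2 ((Perm.sign_extendDomain _ f).trans (Perm.mem_alternatingGroup.1 σ.2))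

theorem extendDomainHom_injective (f : α ≃ Subtype p) : Injective (extendDomainHom f) :=
  fun _ _ h => Subtype.ext (Perm.extendDomainHom_injective f (congrArg Subtype.val h))

theorem extendDomainHom_smul_of_not (f : α ≃ Subtype p) (σ : alternatingGroup α) {x : β}
    (hx : ¬p x) : extendDomainHom f σ • x = x :=
  Perm.extendDomain_apply_not_subtype _ f hx

theorem card_fin_succ {n : ℕ} (hn : 2 ≤ n) :
    Nat.card (alternatingGroup (Fin (n + 1))) = (n + 1) * Nat.card (alternatingGroup (Fin n)) := by
  have : Nontrivial (Fin n) := Fin.nontrivial_iff_two_le.2 hn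
  have : Nontrivial (Fin (n + 1)) := Fin.nontrivial_iff_two_le.2 (by omega)
  have h := two_mul_nat_card_alternatingGroup (α := Fin n)
  have h' := two_mul_nat_card_alternatingGroup (α := Fin (n + 1))
  rw [Nat.card_perm, Nat.card_fin] at h h'
  rw [Nat.factorial_succ, ← h] at h'
  linarith

theorem bijective_mul_extendDomainHom {n : ℕ} (hn : 2 ≤ n) {P : Type*}
    {t : P → alternatingGroup (Fin (n + 1))} (ht : Injective fun p => t p • (0 : Fin (n + 1)))
    (hP : Nat.card P = n + 1) :
    Bijective fun q : P × alternatingGroup (Fin n) =>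
      t q.1 * extendDomainHom (p := (· ≠ 0)) (finSuccAboveEquiv 0) q.2 := by
  refine (injective_mul_of_injective_smul (extendDomainHom_injective _)
    (fun σ => extendDomainHom_smul_of_not (p := (· ≠ 0)) (finSuccAboveEquiv 0) σ (not_not.2 rfl))
    ht).bijective_of_nat_card_le ?_
  rw [Nat.card_prod, hP, card_fin_succ hn]

end alternatingGroup

theorem finRotate_succ_pow_apply_zero {n : ℕ} (k : ℕ) :
    (finRotate (n + 1) ^ k) 0 = (k : Fin (n + 1)) := by
  induction k with
  | zero => simp
  | succ k ih => rw [pow_succ', Perm.mul_apply, ih, finRotate_apply, Nat.cast_succ]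

theorem HasOGS.alternatingGroup_fin_succ_of_even {N : ℕ} (h : HasOGS (alternatingGroup (Fin N)))
    (hN : 2 ≤ N) (hN' : Even N) : HasOGS (alternatingGroup (Fin (N + 1))) := by
  have ha : finRotate (N + 1) ∈ alternatingGroup (Fin (N + 1)) := by
    rw [Perm.mem_alternatingGroup, sign_finRotate, Nat.add_sub_cancel, hN'.neg_one_pow]
  refine h.of_bijective_pow_mul _ <| alternatingGroup.bijective_mul_extendDomainHom hN
    (t := fun i : Fin (N + 1) => ⟨_, ha⟩ ^ (i : ℕ)) (fun i j hij => ?_) (Nat.card_fin _)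
  simpa [Subgroup.smul_def, finRotate_succ_pow_apply_zero] using hij

theorem finRotate_mul_swap_pow_mul_finRotate_sq_pow_apply_zero {N m : ℕ} (hm : 2 ≤ m)
    (hNm : N + 1 = 2 * m) (i : Fin 2) (j : Fin m) :
    ((finRotate (N + 1) * swap 1 3) ^ (i : ℕ) * (finRotate (N + 1) ^ 2) ^ (j : ℕ) :
      Perm (Fin (N + 1))) 0 = ((2 * j + i : ℕ) : Fin (N + 1)) := by
  have hcj : ((finRotate (N + 1) ^ 2) ^ (j : ℕ)) 0 = ((2 * j : ℕ) : Fin (N + 1)) := by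
    rw [← pow_mul, finRotate_succ_pow_apply_zero]
  have val_two_mul : ((2 * j : ℕ) : Fin (N + 1)).val = 2 * j := Fin.val_cast_of_lt (by omega)
  have h1 : ((2 * j : ℕ) : Fin (N + 1)) ≠ 1 := by
    simp [Fin.ext_iff, val_two_mul, Nat.mod_eq_of_lt (show 1 < N + 1 by omega)]
  have h3 : ((2 * j : ℕ) : Fin (N + 1)) ≠ 3 := by
    simp [Fin.ext_iff, val_two_mul, Nat.mod_eq_of_lt (show 3 < N + 1 by omega)]
    omega
  fin_cases i
  · simpa using hcj
  · simp [Perm.mul_apply, hcj, swap_apply_of_ne_of_ne h1 h3, finRotate_apply]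

theorem HasOGS.alternatingGroup_fin_succ_of_odd {N m : ℕ} (h : HasOGS (alternatingGroup (Fin N)))
    (hm : 2 ≤ m) (hNm : N + 1 = 2 * m) : HasOGS (alternatingGroup (Fin (N + 1))) := by
  have h13 : (1 : Fin (N + 1)) ≠ 3 := by
    simp [Fin.ext_iff, Nat.mod_eq_of_lt (show 1 < N + 1 by omega),
      Nat.mod_eq_of_lt (show 3 < N + 1 by omega)]
  have hb : finRotate (N + 1) * swap 1 3 ∈ alternatingGroup (Fin (N + 1)) := by
    rw [Perm.mem_alternatingGroup, map_mul, sign_finRotate, Nat.add_sub_cancel,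
      (show Odd N from ⟨m - 1, by omega⟩).neg_one_pow, Perm.sign_swap h13]
    rfl
  have hc : finRotate (N + 1) ^ 2 ∈ alternatingGroup (Fin (N + 1)) := by
    rw [Perm.mem_alternatingGroup, map_pow, Int.units_sq]
  refine h.of_bijective_pow_mul_pow_mul _ <| alternatingGroup.bijective_mul_extendDomainHom
    (t := fun p : Fin 2 × Fin m => ⟨_, hb⟩ ^ (p.1 : ℕ) * ⟨_, hc⟩ ^ (p.2 : ℕ)) (by omega) ?_
    (by simp [hNm, mul_comm])
  rintro ⟨i, j⟩ ⟨i', j'⟩ hij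
  simp only [Subgroup.smul_def, Subgroup.coe_mul, SubgroupClass.coe_pow, Perm.smul_def,
    finRotate_mul_swap_pow_mul_finRotate_sq_pow_apply_zero hm hNm] at hij
  have hval := congrArg Fin.val hij
  rw [Fin.val_cast_of_lt (by omega), Fin.val_cast_of_lt (by omega)] at hval
  rw [Prod.mk.injEq, Fin.ext_iff, Fin.ext_iff]
  omega

theorem hasOGS_alternatingGroup_general (n : ℕ) :
    HasOGS (alternatingGroup (Fin n)) := by
  induction n with
  | zero => exact .of_subsingleton
  | succ N ih =>
    obtain hN | hN := Nat.lt_or_ge N 2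
    · rw [alternatingGroup.eq_bot_of_card_le_two (by simpa using hN)]
      exact .of_subsingleton
    obtain hN' | ⟨k, rfl⟩ := Nat.even_or_odd N
    · exact ih.alternatingGroup_fin_succ_of_even hN hN'
    · exact ih.alternatingGroup_fin_succ_of_odd (m := k + 1) (by omega) (by omega)

theorem hasOGS_alternatingGroup (n : ℕ) (hn : 1 ≤ n) :
    HasOGS (alternatingGroup (Fin n)) :=
  hasOGS_alternatingGroup_general n
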